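/- arXiv:2307.06517 — 4 statements merged into one kernel-verified Lean document; each statement's English description precedes it below -/
import Mathlib

section
/- Let k ∈ {1,…,l−1} and let B ⊆ R_+(GL_l) be a set of positive roots α_{ij} = ε_i − ε_j (i < j) such that the product Π_{α_{ij} ∈ B}(1 − t z_i/z_j) is invariant under the simple transposition s_k swapping z_k and z_{k+1}. If B contains a root α = α_{k+1,j} for some j > k+1, then σ( z_1⋯z_l / Π_{α_{ij} ∈ B}(1 − t z_i/z_j) ) = σ( z_1⋯z_l / Π_{α_{ij} ∈ B∖{α}}(1 − t z_i/z_j) ), where all denominator factors are expanded as geometric series in z_i/z_j before applying σ. -/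
noncomputable section

/-- `Δ(δ) = Σ_{i<j} δ(i,j) (ε_i - ε_j)`. -/
def Delta (l : ℕ) (δ : Fin l × Fin l → ℕ) : Fin l → ℤ := fun k =>
  (∑ p : Fin l × Fin l, if p.1 < p.2 ∧ p.1 = k then (δ p : ℤ) else 0)
    - ∑ p : Fin l × Fin l, if p.1 < p.2 ∧ p.2 = k then (δ p : ℤ) else 0

/-- The staircase `ρ = (l-1, …, 0)`. -/
def rho (l : ℕ) : Fin l → ℤ := fun i => (l : ℤ) - 1 - (i : ℤ)

/-- Coefficient of `χ_ν` in the Weyl symmetrization `σ(z^w)`. -/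
def weylCoeff (l : ℕ) (w ν : Fin l → ℤ) : ℤ :=
  ∑ π : Equiv.Perm (Fin l),
    if (∀ i, w (π i) + rho l (π i) = ν i + rho l i) then (Equiv.Perm.sign π : ℤ) else 0

/-- The coefficient (a polynomial in `t`) of the irreducible character `χ_ν` in
`σ( z_1⋯z_l / Π_{α_{ij} ∈ B} (1 - t z_i/z_j) )`, where each factor
`(1 - t z_i/z_j)⁻¹` is expanded as a geometric series before applying `σ`
term by term. -/
def SCoeff (l : ℕ) (B : Finset (Fin l × Fin l)) (ν : Fin l → ℤ) : Polynomial ℚ :=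
  ∑ᶠ δ : Fin l × Fin l → ℕ,
    if ∀ p, δ p ≠ 0 → p ∈ B then
      Polynomial.X ^ (∑ p : Fin l × Fin l, δ p) *
        Polynomial.C ((weylCoeff l (fun i => 1 + Delta l δ i) ν : ℤ) : ℚ)
    else 0

/-! ### Auxiliary material -/

/-- The general term of the finsum defining `SCoeff`. -/
def Fterm (l : ℕ) (B : Finset (Fin l × Fin l)) (ν : Fin l → ℤ)
    (δ : Fin l × Fin l → ℕ) : Polynomial ℚ :=
  if ∀ p, δ p ≠ 0 → p ∈ B then
    Polynomial.X ^ (∑ p : Fin l × Fin l, δ p) *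
      Polynomial.C ((weylCoeff l (fun i => 1 + Delta l δ i) ν : ℤ) : ℚ)
  else 0

lemma SCoeff_eq_finsum (l : ℕ) (B : Finset (Fin l × Fin l)) (ν : Fin l → ℤ) :
    SCoeff l B ν = ∑ᶠ δ : Fin l × Fin l → ℕ, Fterm l B ν δ := rfl

/-- A form of `Delta` without the positivity condition. -/
def Dfun (l : ℕ) (δ : Fin l × Fin l → ℕ) (i : Fin l) : ℤ :=
  (∑ p : Fin l × Fin l, if p.1 = i then (δ p : ℤ) else 0)
    - ∑ p : Fin l × Fin l, if p.2 = i then (δ p : ℤ) else 0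

lemma Delta_eq_Dfun {l : ℕ} (δ : Fin l × Fin l → ℕ)
    (hδ : ∀ p : Fin l × Fin l, ¬ p.1 < p.2 → δ p = 0) : Delta l δ = Dfun l δ := by
  funext i
  unfold Delta Dfun
  congr 1 <;> refine Finset.sum_congr rfl fun p _ => ?_ <;>
    by_cases h : p.1 < p.2 <;> simp [h, hδ p]

lemma Dfun_comp_swap {l : ℕ} (s : Equiv.Perm (Fin l)) (δ : Fin l × Fin l → ℕ) (i : Fin l) :
    Dfun l (fun p => δ (s p.1, s p.2)) i = Dfun l δ (s i) := by
  unfold Dfun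
  congr 1
  · refine Fintype.sum_equiv (Equiv.prodCongr s s)
      (fun p => if p.1 = i then (δ (s p.1, s p.2) : ℤ) else 0)
      (fun q => if q.1 = s i then (δ q : ℤ) else 0) fun p => ?_
    obtain ⟨x, y⟩ := p
    simp only [Equiv.prodCongr_apply, Prod.map]
    by_cases h : x = i
    · rw [if_pos h, if_pos (by rw [h])]
    · rw [if_neg h, if_neg fun hc => h (s.injective (by rw [hc]))]
  · refine Fintype.sum_equiv (Equiv.prodCongr s s)
      (fun p => if p.2 = i then (δ (s p.1, s p.2) : ℤ) else 0)
      (fun q => if q.2 = s i then (δ q : ℤ) else 0) fun p => ?_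
    obtain ⟨x, y⟩ := p
    simp only [Equiv.prodCongr_apply, Prod.map]
    by_cases h : y = i
    · rw [if_pos h, if_pos (by rw [h])]
    · rw [if_neg h, if_neg fun hc => h (s.injective (by rw [hc]))]

lemma sum_ite_ite {l : ℕ} (P : Fin l × Fin l → Prop) [DecidablePred P]
    (q : Fin l × Fin l) (c : ℤ) :
    ∑ p : Fin l × Fin l, (if P p then (if p = q then c else 0) else 0)
      = if P q then c else 0 := by
  have h : ∀ p : Fin l × Fin l, (if P p then (if p = q then c else 0) else 0)
      = if p = q then (if P p then c else 0) else 0 := by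
    intro p
    by_cases h : p = q
    · subst h; simp
    · simp [h]
  rw [Finset.sum_congr rfl fun p _ => h p,
    Finset.sum_ite_eq' Finset.univ q (fun p => if P p then c else 0)]
  simp

lemma sum_split {l : ℕ} (P : Fin l × Fin l → Prop) [DecidablePred P]
    (f g : Fin l × Fin l → ℤ) (q r : Fin l × Fin l)
    (hfg : ∀ p, f p = g p + (if p = q then 1 else 0) - (if p = r then 1 else 0)) :
    ∑ p : Fin l × Fin l, (if P p then f p else 0)
      = (∑ p : Fin l × Fin l, if P p then g p else 0)
        + (if P q then 1 else 0) - (if P r then 1 else 0) := by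
  have h1 : ∀ p : Fin l × Fin l, (if P p then f p else 0)
      = (if P p then g p else 0) + (if P p then (if p = q then (1:ℤ) else 0) else 0)
        - (if P p then (if p = r then (1:ℤ) else 0) else 0) := by
    intro p
    rw [hfg p]
    split_ifs <;> ring
  rw [Finset.sum_congr rfl fun p _ => h1 p, Finset.sum_sub_distrib, Finset.sum_add_distrib,
    sum_ite_ite P q 1, sum_ite_ite P r 1]

lemma weylCoeff_flip {l : ℕ} (a b : Fin l) (hab : a ≠ b) (w w' ν : Fin l → ℤ)
    (h : ∀ i, w' i + rho l i = w (Equiv.swap a b i) + rho l (Equiv.swap a b i)) :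
    weylCoeff l w' ν = - weylCoeff l w ν := by
  unfold weylCoeff
  have key : ∀ π : Equiv.Perm (Fin l),
      (if (∀ i, w' (π i) + rho l (π i) = ν i + rho l i) then ((Equiv.Perm.sign π : ℤ)) else 0)
      = -(if (∀ i, w ((Equiv.swap a b * π) i) + rho l ((Equiv.swap a b * π) i) = ν i + rho l i)
          then ((Equiv.Perm.sign (Equiv.swap a b * π) : ℤ)) else 0) := by
    intro π
    have hcond : (∀ i, w' (π i) + rho l (π i) = ν i + rho l i) ↔
        (∀ i, w ((Equiv.swap a b * π) i) + rho l ((Equiv.swap a b * π) i) = ν i + rho l i) := by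
      refine forall_congr' fun i => ?_
      rw [h (π i)]
      rfl
    have hsign : ((Equiv.Perm.sign (Equiv.swap a b * π) : ℤ)) = -(Equiv.Perm.sign π : ℤ) := by
      rw [Equiv.Perm.sign_mul, Equiv.Perm.sign_swap hab]
      simp
    rw [hsign]
    by_cases hc : ∀ i, w' (π i) + rho l (π i) = ν i + rho l i
    · rw [if_pos hc, if_pos (hcond.mp hc), neg_neg]
    · rw [if_neg hc, if_neg (fun hc2 => hc (hcond.mpr hc2)), neg_zero]
  rw [Finset.sum_congr rfl fun π _ => key π, Finset.sum_neg_distrib]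
  congr 1
  exact Fintype.sum_equiv (Equiv.mulLeft (Equiv.swap a b)) _ _ fun π => rfl

lemma rho_abs_le {l : ℕ} (i : Fin l) : |rho l i| ≤ (l : ℤ) := by
  have h1 := i.isLt
  have h2 : ((i : ℕ) : ℤ) < (l : ℤ) := by exact_mod_cast h1
  have h3 : (0 : ℤ) ≤ ((i : ℕ) : ℤ) := Int.natCast_nonneg _
  rw [rho, abs_le]
  omega

lemma sum_Delta_Iic {l : ℕ} (δ : Fin l × Fin l → ℕ) (m : Fin l) :
    ∑ i ∈ Finset.Iic m, Delta l δ i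
      = ∑ p : Fin l × Fin l, if p.1 < p.2 ∧ p.1 ≤ m ∧ m < p.2 then (δ p : ℤ) else 0 := by
  unfold Delta
  rw [Finset.sum_sub_distrib]
  rw [Finset.sum_comm (s := Finset.Iic m) (t := Finset.univ)]
  rw [Finset.sum_comm (s := Finset.Iic m) (t := Finset.univ)]
  have inner1 : ∀ p : Fin l × Fin l,
      (∑ i ∈ Finset.Iic m, if p.1 < p.2 ∧ p.1 = i then (δ p : ℤ) else 0)
        = if p.1 < p.2 ∧ p.1 ≤ m then (δ p : ℤ) else 0 := by
    intro p
    by_cases h : p.1 < p.2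
    · simp only [h, true_and]
      rw [Finset.sum_ite_eq (Finset.Iic m) p.1 (fun _ => (δ p : ℤ))]
      simp [Finset.mem_Iic]
    · simp [h]
  have inner2 : ∀ p : Fin l × Fin l,
      (∑ i ∈ Finset.Iic m, if p.1 < p.2 ∧ p.2 = i then (δ p : ℤ) else 0)
        = if p.1 < p.2 ∧ p.2 ≤ m then (δ p : ℤ) else 0 := by
    intro p
    by_cases h : p.1 < p.2
    · simp only [h, true_and]
      rw [Finset.sum_ite_eq (Finset.Iic m) p.2 (fun _ => (δ p : ℤ))]
      simp [Finset.mem_Iic]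
    · simp [h]
  rw [Finset.sum_congr rfl fun p _ => inner1 p, Finset.sum_congr rfl fun p _ => inner2 p,
    ← Finset.sum_sub_distrib]
  refine Finset.sum_congr rfl fun p _ => ?_
  by_cases h1 : p.1 < p.2
  · by_cases h3 : p.2 ≤ m
    · have h2 : p.1 ≤ m := le_of_lt (lt_of_lt_of_le h1 h3)
      have h4 : ¬ m < p.2 := not_lt.2 h3
      simp [h1, h2, h3, h4]
    · have h4 : m < p.2 := not_le.1 h3
      by_cases h2 : p.1 ≤ m
      · simp [h1, h2, h3, h4]
      · simp [h1, h2, h3]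
  · simp [h1]

lemma delta_bound {l : ℕ} (B : Finset (Fin l × Fin l)) (hBpos : ∀ p ∈ B, p.1 < p.2)
    (ν : Fin l → ℤ) (δ : Fin l × Fin l → ℕ) (hsupp : ∀ p, δ p ≠ 0 → p ∈ B)
    (hwc : weylCoeff l (fun i => 1 + Delta l δ i) ν ≠ 0) :
    ∀ p : Fin l × Fin l, (δ p : ℤ) ≤ ∑ i : Fin l, (|ν i| + 2 * (l : ℤ) + 1) := by
  obtain ⟨π, hπ⟩ : ∃ π : Equiv.Perm (Fin l), ∀ i,
      (1 + Delta l δ (π i)) + rho l (π i) = ν i + rho l i := by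
    by_contra hcon
    push_neg at hcon
    apply hwc
    unfold weylCoeff
    refine Finset.sum_eq_zero fun π _ => ?_
    rw [if_neg]
    intro hc
    obtain ⟨i, hi⟩ := hcon π
    exact hi (hc i)
  have hDpi : ∀ i, Delta l δ (π i) = ν i + rho l i - rho l (π i) - 1 := by
    intro i
    have := hπ i
    linarith
  have habs : ∑ i : Fin l, |Delta l δ i| ≤ ∑ i : Fin l, (|ν i| + 2 * (l : ℤ) + 1) := by
    rw [← Equiv.sum_comp π fun i => |Delta l δ i|]
    refine Finset.sum_le_sum fun i _ => ?_
    rw [hDpi i]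
    have h1 := abs_le.1 (rho_abs_le i)
    have h2 := abs_le.1 (rho_abs_le (π i))
    have h3 : |ν i + rho l i - rho l (π i) - 1|
        ≤ |ν i| + |rho l i - rho l (π i) - 1| := by
      calc |ν i + rho l i - rho l (π i) - 1| = |ν i + (rho l i - rho l (π i) - 1)| := by
            ring_nf
        _ ≤ |ν i| + |rho l i - rho l (π i) - 1| := abs_add_le _ _
    have h4 : |rho l i - rho l (π i) - 1| ≤ 2 * (l : ℤ) + 1 := by
      rw [abs_le]
      omega
    linarith
  intro p
  by_cases hp : p.1 < p.2
  · have key : (δ p : ℤ) ≤ ∑ i ∈ Finset.Iic p.1, Delta l δ i := by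
      rw [sum_Delta_Iic δ p.1]
      have hfp : (if p.1 < p.2 ∧ p.1 ≤ p.1 ∧ p.1 < p.2 then (δ p : ℤ) else 0) = (δ p : ℤ) := by
        rw [if_pos ⟨hp, le_refl _, hp⟩]
      calc (δ p : ℤ) = if p.1 < p.2 ∧ p.1 ≤ p.1 ∧ p.1 < p.2 then (δ p : ℤ) else 0 := hfp.symm
        _ ≤ ∑ q : Fin l × Fin l, if q.1 < q.2 ∧ q.1 ≤ p.1 ∧ p.1 < q.2 then (δ q : ℤ) else 0 := by
            refine Finset.single_le_sum
              (f := fun q : Fin l × Fin l =>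
                if q.1 < q.2 ∧ q.1 ≤ p.1 ∧ p.1 < q.2 then (δ q : ℤ) else 0)
              (fun q _ => ?_) (Finset.mem_univ p)
            split_ifs
            · exact Int.natCast_nonneg _
            · exact le_refl 0
    calc (δ p : ℤ) ≤ ∑ i ∈ Finset.Iic p.1, Delta l δ i := key
      _ ≤ ∑ i ∈ Finset.Iic p.1, |Delta l δ i| :=
          Finset.sum_le_sum fun i _ => le_abs_self _
      _ ≤ ∑ i : Fin l, |Delta l δ i| :=
          Finset.sum_le_sum_of_subset_of_nonneg (Finset.subset_univ _)
            (fun i _ _ => abs_nonneg _)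
      _ ≤ ∑ i : Fin l, (|ν i| + 2 * (l : ℤ) + 1) := habs
  · have h0 : δ p = 0 := by
      by_contra h
      exact hp (hBpos p (hsupp p h))
    rw [h0]
    refine le_trans (by norm_num) (Finset.sum_nonneg fun i _ => ?_)
    have h5 : (0:ℤ) ≤ |ν i| := abs_nonneg (ν i)
    have h6 : (0:ℤ) ≤ (l:ℤ) := Int.natCast_nonneg _
    linarith

lemma support_finite {l : ℕ} (B : Finset (Fin l × Fin l)) (hBpos : ∀ p ∈ B, p.1 < p.2)
    (ν : Fin l → ℤ) : (Function.support (Fterm l B ν)).Finite := by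
  set N : ℕ := (∑ i : Fin l, (|ν i| + 2 * (l : ℤ) + 1)).toNat with hN
  have hfin : (Set.pi Set.univ fun _ : Fin l × Fin l => Set.Iic N).Finite :=
    Set.Finite.pi fun _ => Set.finite_Iic N
  refine hfin.subset ?_
  intro δ hδ
  simp only [Function.mem_support] at hδ
  by_cases hc : ∀ p, δ p ≠ 0 → p ∈ B
  · rw [Fterm, if_pos hc] at hδ
    have hwc : weylCoeff l (fun i => 1 + Delta l δ i) ν ≠ 0 := by
      intro h0
      apply hδ
      rw [h0]
      simp
    have hb := delta_bound B hBpos ν δ hc hwc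
    intro p _
    simp only [Set.mem_Iic]
    have h1 := hb p
    omega
  · rw [Fterm, if_neg hc] at hδ
    exact absurd rfl hδ

/-- Lemma 3.3 of the paper: if `B` is a set of positive roots of `GL_l` such that
`Π_{α_{ij}∈B}(1 - t z_i/z_j)` is fixed by the simple reflection `s_k`, and `B`
contains a root `α = α_{k+1,j}` with `j > k+1`, then
`σ(z_1⋯z_l / Π_{α∈B}(1-t z_i/z_j)) = σ(z_1⋯z_l / Π_{α∈B∖{α}}(1-t z_i/z_j))`,
as formal sums of `GL_l` characters (i.e. all coefficients of dominant `χ_ν` agree). -/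
theorem stmt9 (l k : ℕ) (hk : k + 1 < l)
    (B : Finset (Fin l × Fin l)) (hBpos : ∀ p ∈ B, p.1 < p.2)
    (hinv : ∀ p : Fin l × Fin l, p ∈ B ↔
      (Equiv.swap (⟨k, by omega⟩ : Fin l) ⟨k + 1, hk⟩ p.1,
       Equiv.swap (⟨k, by omega⟩ : Fin l) ⟨k + 1, hk⟩ p.2) ∈ B)
    (j : Fin l) (hj : k + 1 < (j : ℕ))
    (hα : ((⟨k + 1, hk⟩ : Fin l), j) ∈ B) :
    ∀ ν : Fin l → ℤ, (∀ i i' : Fin l, i ≤ i' → ν i' ≤ ν i) →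
      SCoeff l B ν = SCoeff l (B.erase (⟨k + 1, hk⟩, j)) ν := by
  intro ν _
  classical
  set a : Fin l := ⟨k, by omega⟩ with hadef
  set b : Fin l := ⟨k + 1, hk⟩ with hbdef
  set s : Equiv.Perm (Fin l) := Equiv.swap a b with hsdef
  have hab : a ≠ b := by
    simp only [hadef, hbdef, Ne, Fin.mk.injEq]
    omega
  have hja : a ≠ j := by
    intro h
    rw [← h] at hj
    simp only [hadef] at hj
    omega
  have hjb : b ≠ j := by
    intro h
    rw [← h] at hj
    simp only [hbdef] at hj
    omega
  have hsj : s j = j := Equiv.swap_apply_of_ne_of_ne (Ne.symm hja) (Ne.symm hjb)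
  have hsa : s a = b := Equiv.swap_apply_left a b
  have hsb : s b = a := Equiv.swap_apply_right a b
  have hss : ∀ i, s (s i) = i := fun i => Equiv.swap_apply_self a b i
  have hinv' : ∀ p : Fin l × Fin l, p ∈ B ↔ (s p.1, s p.2) ∈ B := hinv
  have haltb : a < b := by
    simp only [hadef, hbdef, Fin.mk_lt_mk]
    omega
  have haltj : a < j := by
    rw [Fin.lt_def]
    simp only [hadef]
    omega
  have hbltj : b < j := by
    rw [Fin.lt_def]
    simp only [hbdef]
    omega
  have hrhoa : rho l a = (l : ℤ) - 1 - (k : ℤ) := rfl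
  have hrhob : rho l b = (l : ℤ) - 1 - ((k + 1 : ℕ) : ℤ) := rfl
  have hzero : ∀ δ : Fin l × Fin l → ℕ, (∀ p, δ p ≠ 0 → p ∈ B) →
      ∀ q : Fin l × Fin l, ¬ q.1 < q.2 → δ q = 0 := by
    intro δ hs q hq
    by_contra h
    exact hq (hBpos _ (hs q h))
  -- the involution on exponent data
  set T : (Fin l × Fin l → ℕ) → (Fin l × Fin l → ℕ) :=
    fun δ p => if p = (a, j) then δ (b, j) - 1 else if p = (b, j) then δ (a, j) + 1
      else δ (s p.1, s p.2) with hT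
  have hne1 : ((a, j) : Fin l × Fin l) ≠ (b, j) := by
    simp [Prod.ext_iff, hab]
  have hne2 : ((b, j) : Fin l × Fin l) ≠ (a, j) := Ne.symm hne1
  have hTap1 : ∀ δ : Fin l × Fin l → ℕ, T δ (a, j) = δ (b, j) - 1 := by
    intro δ
    simp [hT]
  have hTap2 : ∀ δ : Fin l × Fin l → ℕ, T δ (b, j) = δ (a, j) + 1 := by
    intro δ
    simp [hT, hne2]
  have hTap3 : ∀ (δ : Fin l × Fin l → ℕ) (p : Fin l × Fin l), p ≠ (a, j) → p ≠ (b, j) →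
      T δ p = δ (s p.1, s p.2) := by
    intro δ p h1 h2
    simp [hT, h1, h2]
  have hTcast : ∀ δ : Fin l × Fin l → ℕ, δ (b, j) ≠ 0 → ∀ p : Fin l × Fin l,
      ((T δ) p : ℤ) = ((δ (s p.1, s p.2) : ℤ))
        + (if p = (b, j) then 1 else 0) - (if p = (a, j) then 1 else 0) := by
    intro δ hδ p
    have h1 : 1 ≤ δ (b, j) := Nat.one_le_iff_ne_zero.2 hδ
    by_cases hp1 : p = (a, j)
    · subst hp1
      rw [hTap1 δ, if_neg hne1, if_pos rfl]
      have h2 : s (a, j).1 = b := hsa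
      have h3 : s (a, j).2 = j := hsj
      rw [h2, h3, Nat.cast_sub h1]
      push_cast
      ring
    · by_cases hp2 : p = (b, j)
      · subst hp2
        rw [hTap2 δ, if_pos rfl, if_neg hne2]
        have h2 : s (b, j).1 = a := hsb
        have h3 : s (b, j).2 = j := hsj
        rw [h2, h3]
        push_cast
        ring
      · rw [hTap3 δ p hp1 hp2, if_neg hp2, if_neg hp1]
        ring
  have hTpos : ∀ δ : Fin l × Fin l → ℕ, (∀ p, δ p ≠ 0 → p ∈ B) →
      ∀ q : Fin l × Fin l, ¬ q.1 < q.2 → T δ q = 0 := by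
    intro δ hs q hq
    by_cases h1 : q = (a, j)
    · subst h1; exact absurd haltj hq
    · by_cases h2 : q = (b, j)
      · subst h2; exact absurd hbltj hq
      · rw [hTap3 δ q h1 h2]
        by_contra h
        have h3 := hs _ h
        have h4 := (hinv' q).2 h3
        exact hq (hBpos _ h4)
  have hDT : ∀ δ : Fin l × Fin l → ℕ, (∀ p, δ p ≠ 0 → p ∈ B) → δ (b, j) ≠ 0 →
      ∀ i, Delta l (T δ) i = Delta l δ (s i) + rho l (s i) - rho l i := by
    intro δ hs hδ i
    have e1 : Delta l (T δ) = Dfun l (T δ) := Delta_eq_Dfun _ (hTpos δ hs)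
    have e2 : Delta l δ = Dfun l δ := Delta_eq_Dfun _ (hzero δ hs)
    have hsplit1 : (∑ p : Fin l × Fin l, if p.1 = i then ((T δ) p : ℤ) else 0)
        = (∑ p : Fin l × Fin l, if p.1 = i then (δ (s p.1, s p.2) : ℤ) else 0)
          + (if b = i then 1 else 0) - (if a = i then 1 else 0) := by
      have := sum_split (fun p : Fin l × Fin l => p.1 = i) (fun p => ((T δ) p : ℤ))
        (fun p => (δ (s p.1, s p.2) : ℤ)) (b, j) (a, j) (hTcast δ hδ)
      simpa using this
    have hsplit2 : (∑ p : Fin l × Fin l, if p.2 = i then ((T δ) p : ℤ) else 0)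
        = ∑ p : Fin l × Fin l, if p.2 = i then (δ (s p.1, s p.2) : ℤ) else 0 := by
      have := sum_split (fun p : Fin l × Fin l => p.2 = i) (fun p => ((T δ) p : ℤ))
        (fun p => (δ (s p.1, s p.2) : ℤ)) (b, j) (a, j) (hTcast δ hδ)
      simpa using this
    have hD : Dfun l (T δ) i = Dfun l (fun p => δ (s p.1, s p.2)) i
        + (if b = i then 1 else 0) - (if a = i then 1 else 0) := by
      unfold Dfun
      rw [hsplit1, hsplit2]
      ring
    have hrho : rho l (s i) - rho l i
        = (if b = i then 1 else 0) - (if a = i then 1 else 0) := by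
      by_cases h1 : i = a
      · subst h1
        rw [hsa, if_neg (Ne.symm hab), if_pos rfl, hrhoa, hrhob]
        push_cast
        ring
      · by_cases h2 : i = b
        · subst h2
          rw [hsb, if_pos rfl, if_neg hab, hrhoa, hrhob]
          push_cast
          ring
        · have hsi : s i = i := Equiv.swap_apply_of_ne_of_ne h1 h2
          rw [hsi, if_neg fun h => h2 h.symm, if_neg fun h => h1 h.symm]
          ring
    rw [e1, e2, hD, Dfun_comp_swap s δ i]
    linarith [hrho]
  have hsum_T : ∀ δ : Fin l × Fin l → ℕ, δ (b, j) ≠ 0 →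
      (∑ p : Fin l × Fin l, T δ p) = ∑ p : Fin l × Fin l, δ p := by
    intro δ hδ
    have hz : ((∑ p : Fin l × Fin l, T δ p : ℕ) : ℤ)
        = ((∑ p : Fin l × Fin l, δ p : ℕ) : ℤ) := by
      push_cast
      rw [Finset.sum_congr rfl fun p _ => hTcast δ hδ p, Finset.sum_sub_distrib,
        Finset.sum_add_distrib]
      rw [Finset.sum_ite_eq' Finset.univ ((b, j) : Fin l × Fin l) (fun _ => (1:ℤ)),
        Finset.sum_ite_eq' Finset.univ ((a, j) : Fin l × Fin l) (fun _ => (1:ℤ))]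
      simp only [Finset.mem_univ, if_true]
      have heq : ∑ p : Fin l × Fin l, ((δ (s p.1, s p.2) : ℤ))
          = ∑ p : Fin l × Fin l, ((δ p : ℤ)) := by
        refine Fintype.sum_equiv (Equiv.prodCongr s s) _ _ fun p => ?_
        obtain ⟨x, y⟩ := p
        simp [Equiv.prodCongr_apply, Prod.map]
      rw [heq]
      ring
    exact_mod_cast hz
  have hTsupp : ∀ δ : Fin l × Fin l → ℕ, (∀ p, δ p ≠ 0 → p ∈ B) →
      ∀ p : Fin l × Fin l, T δ p ≠ 0 → p ∈ B := by
    intro δ hs p hp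
    by_cases h1 : p = (a, j)
    · subst h1
      have h2 := (hinv' (b, j)).1 hα
      have h3 : s (b, j).1 = a := hsb
      have h4 : s (b, j).2 = j := hsj
      rw [h3, h4] at h2
      exact h2
    · by_cases h2 : p = (b, j)
      · subst h2; exact hα
      · rw [hTap3 δ p h1 h2] at hp
        exact (hinv' p).2 (hs _ hp)
  have hTα : ∀ δ : Fin l × Fin l → ℕ, T δ (b, j) ≠ 0 := by
    intro δ
    rw [hTap2 δ]
    omega
  have hTT : ∀ δ : Fin l × Fin l → ℕ, (∀ p, δ p ≠ 0 → p ∈ B) → δ (b, j) ≠ 0 →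
      T (T δ) = δ := by
    intro δ hs hδ
    funext p
    by_cases h1 : p = (a, j)
    · subst h1
      rw [hTap1 (T δ), hTap2 δ]
      omega
    · by_cases h2 : p = (b, j)
      · subst h2
        rw [hTap2 (T δ), hTap1 δ]
        omega
      · have h3 : ((s p.1, s p.2) : Fin l × Fin l) ≠ (a, j) := by
          intro h
          apply h2
          have h5 : p.1 = b := by
            have h7 := congrArg Prod.fst h
            simp only at h7
            rw [← hss p.1, h7, hsa]
          have h6 : p.2 = j := by
            have h7 := congrArg Prod.snd h
            simp only at h7
            rw [← hss p.2, h7, hsj]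
          rw [← h5, ← h6]
        have h4 : ((s p.1, s p.2) : Fin l × Fin l) ≠ (b, j) := by
          intro h
          apply h1
          have h5 : p.1 = a := by
            have h7 := congrArg Prod.fst h
            simp only at h7
            rw [← hss p.1, h7, hsb]
          have h6 : p.2 = j := by
            have h7 := congrArg Prod.snd h
            simp only at h7
            rw [← hss p.2, h7, hsj]
          rw [← h5, ← h6]
        rw [hTap3 (T δ) p h1 h2, hTap3 δ (s p.1, s p.2) h3 h4]
        have h5 : s (s p.1, s p.2).1 = p.1 := by rw [show (s p.1, s p.2).1 = s p.1 from rfl, hss]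
        have h6 : s (s p.1, s p.2).2 = p.2 := by rw [show (s p.1, s p.2).2 = s p.2 from rfl, hss]
        rw [h5, h6]
  have hflip : ∀ δ : Fin l × Fin l → ℕ, (∀ p, δ p ≠ 0 → p ∈ B) → δ (b, j) ≠ 0 →
      weylCoeff l (fun i => 1 + Delta l (T δ) i) ν
        = - weylCoeff l (fun i => 1 + Delta l δ i) ν := by
    intro δ hs hδ
    refine weylCoeff_flip a b hab _ _ ν fun i => ?_
    show 1 + Delta l (T δ) i + rho l i = 1 + Delta l δ (s i) + rho l (s i)
    linarith [hDT δ hs hδ i]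
  -- global bookkeeping
  have hFfin : (Function.support (Fterm l B ν)).Finite := support_finite B hBpos ν
  have hGfin : (Function.support (Fterm l (B.erase (b, j)) ν)).Finite :=
    support_finite (B.erase (b, j)) (fun p hp => hBpos p (Finset.mem_of_mem_erase hp)) ν
  have hfin : (Function.support (Fterm l B ν)
      ∪ Function.support (Fterm l (B.erase (b, j)) ν)).Finite := hFfin.union hGfin
  have hSF : SCoeff l B ν = ∑ δ ∈ hfin.toFinset, Fterm l B ν δ := by
    rw [SCoeff_eq_finsum]
    refine finsum_eq_sum_of_support_subset _ fun δ hδ => ?_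
    rw [Set.Finite.coe_toFinset]
    exact Or.inl hδ
  have hSG : SCoeff l (B.erase (b, j)) ν
      = ∑ δ ∈ hfin.toFinset, Fterm l (B.erase (b, j)) ν δ := by
    rw [SCoeff_eq_finsum]
    refine finsum_eq_sum_of_support_subset _ fun δ hδ => ?_
    rw [Set.Finite.coe_toFinset]
    exact Or.inr hδ
  rw [hSF, hSG, ← sub_eq_zero, ← Finset.sum_sub_distrib]
  set Cond : (Fin l × Fin l → ℕ) → Prop := fun δ =>
    δ (b, j) ≠ 0 ∧ (∀ p, δ p ≠ 0 → p ∈ B) ∧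
      weylCoeff l (fun i => 1 + Delta l δ i) ν ≠ 0 with hCond
  set ι : (Fin l × Fin l → ℕ) → (Fin l × Fin l → ℕ) := fun δ =>
    if Cond δ then T δ else δ with hι
  have hG0 : ∀ δ : Fin l × Fin l → ℕ, δ (b, j) ≠ 0 → Fterm l (B.erase (b, j)) ν δ = 0 := by
    intro δ hδ
    rw [Fterm, if_neg]
    intro hc
    exact Finset.notMem_erase (b, j) B (hc (b, j) hδ)
  have hFG : ∀ δ : Fin l × Fin l → ℕ, δ (b, j) = 0 →
      Fterm l B ν δ = Fterm l (B.erase (b, j)) ν δ := by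
    intro δ hδ
    have hiff : (∀ p, δ p ≠ 0 → p ∈ B) ↔ (∀ p, δ p ≠ 0 → p ∈ B.erase (b, j)) := by
      constructor
      · intro h p hp
        refine Finset.mem_erase.2 ⟨?_, h p hp⟩
        intro hc
        rw [hc] at hp
        exact hp hδ
      · intro h p hp
        exact Finset.mem_of_mem_erase (h p hp)
    rw [Fterm, Fterm]
    by_cases h : ∀ p, δ p ≠ 0 → p ∈ B
    · rw [if_pos h, if_pos (hiff.1 h)]
    · rw [if_neg h, if_neg fun hc => h (hiff.2 hc)]
  have hFflip : ∀ δ : Fin l × Fin l → ℕ, Cond δ → Fterm l B ν (T δ) = - Fterm l B ν δ := by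
    intro δ hc
    obtain ⟨h1, h2, h3⟩ := hc
    rw [Fterm, Fterm, if_pos (hTsupp δ h2), if_pos h2, hsum_T δ h1, hflip δ h2 h1,
      Int.cast_neg, map_neg, mul_neg]
  have hFne : ∀ δ : Fin l × Fin l → ℕ, Cond δ → Fterm l B ν δ ≠ 0 := by
    intro δ hc
    obtain ⟨h1, h2, h3⟩ := hc
    rw [Fterm, if_pos h2]
    refine mul_ne_zero (pow_ne_zero _ Polynomial.X_ne_zero) fun hc2 => h3 ?_
    rw [Polynomial.C_eq_zero] at hc2
    exact_mod_cast hc2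
  have hCondT : ∀ δ : Fin l × Fin l → ℕ, Cond δ → Cond (T δ) := by
    intro δ hc
    obtain ⟨h1, h2, h3⟩ := hc
    refine ⟨hTα δ, hTsupp δ h2, ?_⟩
    rw [hflip δ h2 h1]
    simpa using h3
  have hnotCond : ∀ δ : Fin l × Fin l → ℕ, ¬ Cond δ →
      Fterm l B ν δ - Fterm l (B.erase (b, j)) ν δ = 0 := by
    intro δ hc
    by_cases h1 : δ (b, j) = 0
    · rw [hFG δ h1, sub_self]
    · rw [hG0 δ h1, sub_zero]
      by_cases h2 : ∀ p, δ p ≠ 0 → p ∈ B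
      · by_cases h3 : weylCoeff l (fun i => 1 + Delta l δ i) ν = 0
        · rw [Fterm, if_pos h2, h3]
          simp
        · exact absurd ⟨h1, h2, h3⟩ hc
      · rw [Fterm, if_neg h2]
  have hι_pos : ∀ δ : Fin l × Fin l → ℕ, Cond δ → ι δ = T δ := by
    intro δ hc
    simp only [hι, if_pos hc]
  have hι_neg : ∀ δ : Fin l × Fin l → ℕ, ¬ Cond δ → ι δ = δ := by
    intro δ hc
    simp only [hι, if_neg hc]
  have key : ∀ δ : Fin l × Fin l → ℕ,
      (Fterm l B ν δ - Fterm l (B.erase (b, j)) ν δ)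
        + (Fterm l B ν (ι δ) - Fterm l (B.erase (b, j)) ν (ι δ)) = 0 := by
    intro δ
    by_cases hc : Cond δ
    · rw [hι_pos δ hc, hFflip δ hc, hG0 δ hc.1, hG0 (T δ) (hTα δ)]
      ring
    · rw [hι_neg δ hc, hnotCond δ hc]
      ring
  refine Finset.sum_involution (fun δ _ => ι δ) (fun δ _ => key δ) ?_ ?_ ?_
  · -- the involution moves points with nonzero contribution
    intro δ hδ hne heq
    replace heq : ι δ = δ := heq
    have h1 := key δ
    rw [heq] at h1
    have h4 : (2 : Polynomial ℚ) * (Fterm l B ν δ - Fterm l (B.erase (b, j)) ν δ) = 0 := by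
      rw [two_mul]
      exact h1
    rcases mul_eq_zero.1 h4 with h5 | h5
    · exact absurd h5 (by norm_num)
    · exact hne h5
  · -- membership
    intro δ hδ
    show ι δ ∈ hfin.toFinset
    by_cases hc : Cond δ
    · rw [hι_pos δ hc, Set.Finite.mem_toFinset]
      left
      rw [Function.mem_support, hFflip δ hc]
      simpa using hFne δ hc
    · rw [hι_neg δ hc]
      exact hδ
  · -- involutivity
    intro δ hδ
    show ι (ι δ) = δ
    by_cases hc : Cond δ
    · rw [hι_pos δ hc, hι_pos (T δ) (hCondT δ hc)]
      exact hTT δ hc.2.1 hc.1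
    · rw [hι_neg δ hc, hι_neg δ hc]

end
end

section
/- Let μ be a partition of l, let R_μ be the set of roots defined via the reading order of the boxes of μ, and let B_μ be the set of positive roots α_{ij} of GL_l with i, j in distinct blocks of the set partition of {1,…,l} into consecutive intervals of sizes μ_{ℓ(μ)},…,μ_1. Then R_μ ⊆ B_μ. -/
/-!
The box `b a` in row `j` and column `i` is preceded in reading order by the `μ_{j+1} + ⋯ + μ_L`
boxes of the rows above it and by `i - 1` boxes of its own row, so its position `a` lies in
`[μ_{j+1} + ⋯ + μ_L, μ_j + ⋯ + μ_L)` and its block is `L - j`: blocks are exactly rows.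
For a pair in `R_μ`, `b a'` comes weakly after `south (b a)` in reading order, hence lies in a
strictly lower row than `b a`, so the two positions lie in different blocks.
-/

/-- Reading order on boxes `(i, j)`. -/
def readLT (c d : ℕ × ℕ) : Prop := d.2 < c.2 ∨ (c.2 = d.2 ∧ c.1 < d.1)

instance : DecidableRel readLT := fun c d => by unfold readLT; infer_instance

def south (c : ℕ × ℕ) : ℕ × ℕ := (c.1, c.2 - 1)

open Finset

lemma readLT_irrefl (c : ℕ × ℕ) : ¬ readLT c c := by
  unfold readLT; omega

lemma readLT_asymm {c d : ℕ × ℕ} (h : readLT c d) : ¬ readLT d c := by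
  unfold readLT at *; omega

lemma snd_lt_of_readLT_south {c d : ℕ × ℕ} (hd : 1 ≤ d.2)
    (h : readLT (south c) d ∨ south c = d) : d.2 < c.2 := by
  rcases h with h | rfl
  · unfold readLT south at h; omega
  · unfold south at hd ⊢; omega

lemma card_filter_readLT_eq_index {l : ℕ} {s : Finset (ℕ × ℕ)} {b : Fin l → ℕ × ℕ}
    (hb1 : ∀ a, b a ∈ s) (hb2 : ∀ c ∈ s, ∃ a, b a = c)
    (hb3 : ∀ a a' : Fin l, a < a' → readLT (b a) (b a')) (a : Fin l) :
    #{c ∈ s | readLT c (b a)} = a := by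
  have hinj : Function.Injective b := by
    intro a a' h
    by_contra hne
    rcases Ne.lt_or_gt hne with h' | h'
    · exact readLT_irrefl (b a') (h ▸ hb3 a a' h')
    · exact readLT_irrefl (b a) (h ▸ hb3 a' a h')
  have hfilter : {c ∈ s | readLT c (b a)} = (Iio a).image b := by
    ext c
    simp only [mem_filter, mem_image, mem_Iio]
    constructor
    · rintro ⟨hc, hlt⟩
      obtain ⟨a', rfl⟩ := hb2 c hc
      refine ⟨a', ?_, rfl⟩
      rcases lt_trichotomy a' a with h | rfl | h
      · exact h
      · exact absurd hlt (readLT_irrefl _)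
      · exact absurd (hb3 a a' h) (readLT_asymm hlt)
    · rintro ⟨a', h, rfl⟩
      exact ⟨hb1 a', hb3 a' a h⟩
  rw [hfilter, card_image_of_injective _ hinj, Fin.card_Iio]

lemma card_filter_sum_Icc_le {μ : ℕ → ℕ} {L j n : ℕ}
    (hlow : ∑ s ∈ Icc (j + 1) L, μ s ≤ n) (hhigh : n < ∑ s ∈ Icc j L, μ s) :
    #{r ∈ Icc 1 L | ∑ s ∈ Icc r L, μ s ≤ n} = L - j := by
  have hanti : ∀ {r r'}, r ≤ r' → ∑ s ∈ Icc r' L, μ s ≤ ∑ s ∈ Icc r L, μ s :=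
    fun h => sum_le_sum_of_subset (Icc_subset_Icc_left h)
  have hfilter : {r ∈ Icc 1 L | ∑ s ∈ Icc r L, μ s ≤ n} = Icc (j + 1) L := by
    ext r
    simp only [mem_filter, mem_Icc]
    constructor
    · rintro ⟨⟨-, hrL⟩, hr⟩
      refine ⟨?_, hrL⟩
      by_contra! hrj
      have := hanti (Nat.le_of_lt_succ hrj)
      omega
    · rintro ⟨hjr, hrL⟩
      exact ⟨⟨by omega, hrL⟩, (hanti hjr).trans hlow⟩
  rw [hfilter, Nat.card_Icc]
  omega

section Diagram

variable {L : ℕ} {μ : ℕ → ℕ} {cells : Finset (ℕ × ℕ)}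

lemma snd_le_of_mem_cells (hcells : ∀ c, c ∈ cells ↔ 1 ≤ c.2 ∧ 1 ≤ c.1 ∧ c.1 ≤ μ c.2)
    (hL0 : ∀ j, L < j → μ j = 0) {c : ℕ × ℕ} (hc : c ∈ cells) :
    c.2 ≤ L := by
  obtain ⟨-, h1, hμ⟩ := (hcells c).1 hc
  by_contra! h
  have := hL0 c.2 h
  omega

lemma filter_snd_eq_fst_lt (hcells : ∀ c, c ∈ cells ↔ 1 ≤ c.2 ∧ 1 ≤ c.1 ∧ c.1 ≤ μ c.2)
    {s : ℕ} (hs : 1 ≤ s) (k : ℕ) :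
    {c ∈ cells | c.2 = s ∧ c.1 < k} = Ico 1 (min k (μ s + 1)) ×ˢ {s} := by
  ext ⟨t, u⟩
  simp only [mem_filter, hcells, mem_product, mem_Ico, mem_singleton]
  constructor
  · rintro ⟨⟨-, ht1, htμ⟩, rfl, htk⟩
    exact ⟨⟨ht1, by omega⟩, rfl⟩
  · rintro ⟨⟨ht1, htk⟩, rfl⟩
    exact ⟨⟨hs, ht1, by omega⟩, rfl, by omega⟩

lemma card_filter_snd_eq_fst_lt
    (hcells : ∀ c, c ∈ cells ↔ 1 ≤ c.2 ∧ 1 ≤ c.1 ∧ c.1 ≤ μ c.2) {s : ℕ} (hs : 1 ≤ s) (k : ℕ) :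
    #{c ∈ cells | c.2 = s ∧ c.1 < k} = min k (μ s + 1) - 1 := by
  rw [filter_snd_eq_fst_lt hcells hs, card_product, Nat.card_Ico, card_singleton, mul_one]

lemma card_filter_lt_snd (hcells : ∀ c, c ∈ cells ↔ 1 ≤ c.2 ∧ 1 ≤ c.1 ∧ c.1 ≤ μ c.2)
    (hL0 : ∀ j, L < j → μ j = 0) (j : ℕ) :
    #{c ∈ cells | j < c.2} = ∑ s ∈ Icc (j + 1) L, μ s := by
  rw [card_eq_sum_card_fiberwise (f := Prod.snd) (t := Icc (j + 1) L)]
  · refine sum_congr rfl fun s hs => ?_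
    have hjs : j + 1 ≤ s := (mem_Icc.1 hs).1
    rw [filter_filter, filter_congr (q := fun c => c.2 = s ∧ c.1 < μ s + 1)]
    · rw [card_filter_snd_eq_fst_lt hcells (by omega)]
      omega
    · intro c hc
      have := ((hcells c).1 hc).2.2
      constructor
      · rintro ⟨-, rfl⟩; exact ⟨rfl, by omega⟩
      · rintro ⟨rfl, -⟩; exact ⟨by omega, rfl⟩
  · intro c hc
    rw [mem_coe, mem_filter] at hc
    exact mem_Icc.2 ⟨hc.2, snd_le_of_mem_cells hcells hL0 hc.1⟩

lemma card_filter_readLT (hcells : ∀ c, c ∈ cells ↔ 1 ≤ c.2 ∧ 1 ≤ c.1 ∧ c.1 ≤ μ c.2)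
    (hL0 : ∀ j, L < j → μ j = 0) {i j : ℕ} (hij : (i, j) ∈ cells) :
    #{c ∈ cells | readLT c (i, j)} = ∑ s ∈ Icc (j + 1) L, μ s + (i - 1) := by
  obtain ⟨hj, -, hiμ⟩ := (hcells (i, j)).1 hij
  have hsplit : {c ∈ cells | readLT c (i, j)} =
      {c ∈ cells | j < c.2} ∪ {c ∈ cells | c.2 = j ∧ c.1 < i} := by
    rw [← filter_or]
    rfl
  have hdisj : Disjoint {c ∈ cells | j < c.2} {c ∈ cells | c.2 = j ∧ c.1 < i} :=
    disjoint_filter.2 fun c _ h h' => by omega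
  rw [hsplit, card_union_of_disjoint hdisj, card_filter_lt_snd hcells hL0,
    card_filter_snd_eq_fst_lt hcells hj]
  simp only at hj hiμ ⊢
  omega

lemma card_filter_sum_Icc_le_index
    (hcells : ∀ c, c ∈ cells ↔ 1 ≤ c.2 ∧ 1 ≤ c.1 ∧ c.1 ≤ μ c.2)
    (hL0 : ∀ j, L < j → μ j = 0) {l : ℕ} {b : Fin l → ℕ × ℕ}
    (hb1 : ∀ a, b a ∈ cells) (hb2 : ∀ c ∈ cells, ∃ a, b a = c)
    (hb3 : ∀ a a' : Fin l, a < a' → readLT (b a) (b a')) (a : Fin l) :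
    #{r ∈ Icc 1 L | ∑ s ∈ Icc r L, μ s ≤ (a : ℕ)} = L - (b a).2 := by
  rcases hba : b a with ⟨i, j⟩
  have hmem : (i, j) ∈ cells := hba ▸ hb1 a
  obtain ⟨-, hi, hiμ⟩ := (hcells (i, j)).1 hmem
  have hindex : (a : ℕ) = ∑ s ∈ Icc (j + 1) L, μ s + (i - 1) := by
    rw [← card_filter_readLT_eq_index hb1 hb2 hb3 a, hba, card_filter_readLT hcells hL0 hmem]
  have hjL : j ≤ L := snd_le_of_mem_cells hcells hL0 hmem
  have hrow : ∑ s ∈ Icc j L, μ s = μ j + ∑ s ∈ Icc (j + 1) L, μ s := by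
    rw [Icc_eq_cons_Ioc hjL, sum_cons, Icc_add_one_left_eq_Ioc]
  simp only at hi hiμ ⊢
  exact card_filter_sum_Icc_le (by omega) (by omega)

end Diagram

theorem stmt10_general (l L : ℕ) (μ : ℕ → ℕ)
    (hL0 : ∀ j, L < j → μ j = 0)
    (cells : Finset (ℕ × ℕ))
    (hcells : ∀ c, c ∈ cells ↔ 1 ≤ c.2 ∧ 1 ≤ c.1 ∧ c.1 ≤ μ c.2)
    (b : Fin l → ℕ × ℕ)
    (hb1 : ∀ a, b a ∈ cells)
    (hb2 : ∀ c ∈ cells, ∃ a, b a = c)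
    (hb3 : ∀ a a' : Fin l, a < a' → readLT (b a) (b a')) :
    letI blk : Fin l → ℕ := fun a =>
      ((Finset.Icc 1 L).filter fun r => (∑ s ∈ Finset.Icc r L, μ s) ≤ (a : ℕ)).card
    letI Rmu : Finset (Fin l × Fin l) :=
      Finset.univ.filter fun p => p.1 < p.2 ∧ south (b p.1) ∈ cells ∧
        (readLT (south (b p.1)) (b p.2) ∨ south (b p.1) = b p.2)
    letI Bmu : Finset (Fin l × Fin l) :=
      Finset.univ.filter fun p => p.1 < p.2 ∧ blk p.1 ≠ blk p.2
    Rmu ⊆ Bmu := by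
  intro p hp
  obtain ⟨-, hlt, -, hsouth⟩ := mem_filter.1 hp
  refine mem_filter.2 ⟨mem_univ _, hlt, ?_⟩
  have hblk := card_filter_sum_Icc_le_index hcells hL0 hb1 hb2 hb3
  have hrow : (b p.2).2 < (b p.1).2 :=
    snd_lt_of_readLT_south ((hcells _).1 (hb1 p.2)).1 hsouth
  have hL : (b p.1).2 ≤ L := snd_le_of_mem_cells hcells hL0 (hb1 p.1)
  show #{r ∈ Icc 1 L | ∑ s ∈ Icc r L, μ s ≤ (p.1 : ℕ)} ≠
    #{r ∈ Icc 1 L | ∑ s ∈ Icc r L, μ s ≤ (p.2 : ℕ)}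
  rw [hblk, hblk]
  omega

/-- Let `μ` be a partition of `l` with `L` parts, with boxes listed in reading
order by `b`.  Let `B_μ` be the set of pairs `(a, a')`, `a < a'`, lying in
distinct blocks of the partition of the `l` positions into consecutive intervals
of sizes `μ_L, …, μ_1` (block membership measured by the function `blk`, which
counts the tail sums `μ_r + ⋯ + μ_L` that are `≤` the position).  Then
`R_μ ⊆ B_μ`. -/
theorem stmt10 (l L : ℕ) (μ : ℕ → ℕ)
    (hμ : ∀ j, 1 ≤ j → μ (j + 1) ≤ μ j)
    (hL0 : ∀ j, L < j → μ j = 0)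
    (hLpos : ∀ j, 1 ≤ j → j ≤ L → 1 ≤ μ j)
    (cells : Finset (ℕ × ℕ))
    (hcells : ∀ c, c ∈ cells ↔ 1 ≤ c.2 ∧ 1 ≤ c.1 ∧ c.1 ≤ μ c.2)
    (hl : cells.card = l)
    (b : Fin l → ℕ × ℕ)
    (hb1 : ∀ a, b a ∈ cells)
    (hb2 : ∀ c ∈ cells, ∃ a, b a = c)
    (hb3 : ∀ a a' : Fin l, a < a' → readLT (b a) (b a')) :
    letI blk : Fin l → ℕ := fun a =>
      ((Finset.Icc 1 L).filter fun r => (∑ s ∈ Finset.Icc r L, μ s) ≤ (a : ℕ)).card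
    letI Rmu : Finset (Fin l × Fin l) :=
      Finset.univ.filter fun p => p.1 < p.2 ∧ south (b p.1) ∈ cells ∧
        (readLT (south (b p.1)) (b p.2) ∨ south (b p.1) = b p.2)
    letI Bmu : Finset (Fin l × Fin l) :=
      Finset.univ.filter fun p => p.1 < p.2 ∧ blk p.1 ≠ blk p.2
    Rmu ⊆ Bmu :=
  stmt10_general l L μ hL0 cells hcells b hb1 hb2 hb3
end

section
/- For a tuple of ribbons ν(S) associated to β ∈ (Z_+)^k and S ⊆ V_β as in the HHL setup, the number of attacking pairs of ν(S) is independent of S: it depends only on β. -/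
/-- The position in `ℤ × ℤ` of the box of content `-j` in the `i`-th ribbon of
the tuple `ν(S)`: the box of content `-1` is placed at `(0,1)`, and the box of
content `-(j+1)` is placed directly north of the box of content `-j` if the
domino `(i, j+1)` belongs to `S`, and directly west of it otherwise. -/
def posS (k : ℕ) (S : Finset (Fin k × ℕ)) (i : Fin k) : ℕ → ℤ × ℤ
  | 0 => (0, 1)
  | 1 => (0, 1)
  | (j + 2) =>
      if (i, j + 2) ∈ S then
        ((posS k S i (j + 1)).1, (posS k S i (j + 1)).2 + 1)
      else
        ((posS k S i (j + 1)).1 - 1, (posS k S i (j + 1)).2)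

/-- The adjusted content `c̃ = c + (i+1)·ε` of the box of the tuple `ν(S)`
indexed by `(i, j)` (the `j`-th box of the `i`-th ribbon). -/
def adjC (k : ℕ) (S : Finset (Fin k × ℕ)) (ε : ℚ) (c : Fin k × ℕ) : ℚ :=
  (((posS k S c.1 c.2).1 - (posS k S c.1 c.2).2 : ℤ) : ℚ) + ((c.1 : ℕ) + 1) * ε

/-- The number of attacking pairs of the tuple of ribbons `ν(S)`: ordered pairs
of boxes `(a, b)` with `a < b` in reading order (which refines adjusted content,
boxes on a diagonal increasing from southwest to northeast) and
`0 < c̃(b) - c̃(a) < 1`. -/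
def attackCount (k : ℕ) (boxes S : Finset (Fin k × ℕ)) (ε : ℚ) : ℕ :=
  ((boxes ×ˢ boxes).filter fun pq =>
    (adjC k S ε pq.1 < adjC k S ε pq.2 ∨
      (adjC k S ε pq.1 = adjC k S ε pq.2 ∧
        (posS k S pq.1.1 pq.1.2).1 < (posS k S pq.2.1 pq.2.2).1)) ∧
    0 < adjC k S ε pq.2 - adjC k S ε pq.1 ∧
    adjC k S ε pq.2 - adjC k S ε pq.1 < 1).card

/-- The content of the `(j+1)`-st box of a ribbon is `-(j+1)`, independent of `S`. -/
lemma posS_diff (k : ℕ) (S : Finset (Fin k × ℕ)) (i : Fin k) :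
    ∀ j : ℕ, (posS k S i (j + 1)).1 - (posS k S i (j + 1)).2 = -((j : ℤ) + 1) := by
  intro j
  induction j with
  | zero => simp [posS]
  | succ n ih =>
      show (posS k S i (n + 2)).1 - (posS k S i (n + 2)).2 = _
      rw [posS]
      by_cases h : (i, n + 2) ∈ S <;> simp [h] <;> push_cast <;> omega

/-- `adjC` does not depend on `S` for boxes with positive second coordinate. -/
lemma adjC_eq (k : ℕ) (S : Finset (Fin k × ℕ)) (ε : ℚ) (c : Fin k × ℕ)
    (hc : 1 ≤ c.2) : adjC k S ε c = -(c.2 : ℚ) + ((c.1 : ℕ) + 1) * ε := by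
  obtain ⟨i, m⟩ := c
  simp only at hc ⊢
  obtain ⟨j, rfl⟩ : ∃ j, m = j + 1 := ⟨m - 1, by omega⟩
  unfold adjC
  rw [posS_diff]
  push_cast
  ring

/-- For a tuple of ribbons `ν(S)` associated to `β ∈ (ℤ_+)^k` and `S ⊆ V_β`,
the number of attacking pairs is independent of `S`. -/
theorem stmt14 (k : ℕ) (β : Fin k → ℕ) (hβ : ∀ i, 0 < β i)
    (boxes : Finset (Fin k × ℕ))
    (hboxes : ∀ c, c ∈ boxes ↔ 1 ≤ c.2 ∧ c.2 ≤ β c.1)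
    (ε : ℚ) (hε0 : 0 < ε) (hε1 : ε < 1 / k)
    (S S' : Finset (Fin k × ℕ))
    (hS : ∀ v ∈ S, 2 ≤ v.2 ∧ v.2 ≤ β v.1)
    (hS' : ∀ v ∈ S', 2 ≤ v.2 ∧ v.2 ≤ β v.1) :
    attackCount k boxes S ε = attackCount k boxes S' ε := by
  unfold attackCount
  congr 1
  apply Finset.filter_congr
  intro pq hpq
  rw [Finset.mem_product] at hpq
  have h1 := ((hboxes pq.1).mp hpq.1).1
  have h2 := ((hboxes pq.2).mp hpq.2).1
  rw [adjC_eq k S ε pq.1 h1, adjC_eq k S ε pq.2 h2,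
      adjC_eq k S' ε pq.1 h1, adjC_eq k S' ε pq.2 h2]
  constructor
  · rintro ⟨_, h0, hlt⟩
    exact ⟨Or.inl (by linarith), h0, hlt⟩
  · rintro ⟨_, h0, hlt⟩
    exact ⟨Or.inl (by linarith), h0, hlt⟩
end

section
/- Let μ be a partition of l. Expanding each factor (1 − t z_i/z_j)^{-1} for α_{ij} ∈ R_μ as a geometric series and applying the Weyl symmetrization σ term by term, the resulting formal sum of GL_l characters σ( z_1⋯z_l / Π_{α_{ij}∈R_μ}(1 − t z_i/z_j) ) has, as coefficient of the character χ_{1^l}, the value 1 (i.e., the character expansion equals χ_{1^l} plus terms a_ν χ_ν with ν > 1^l in dominance order). -/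
noncomputable section

/-!
If `σ(z^w) = ±χ_ν` with `ν` dominant, then `ν + ρ` is the decreasing rearrangement of `w + ρ`,
so the rearrangement inequality gives `Σ f w ≤ Σ f ν` for every antitone weight `f`.
Every term of the expansion has `w = 1^l + Δ(δ)`, and `Σ f Δ(δ) ≥ 0` for antitone `f`;
hence `Σ f ≤ Σ f ν`, which for `f = ±1` and `f = 1_{[0, r)}` says `ν ≥ 1^l`.
For `ν = 1^l` and `f = ρ` it forces `Σ ρ Δ(δ) ≤ 0`, whereas `ρ` is strictly antitone, so that
sum is positive for every nonzero `δ` supported on positive roots: only `δ = 0` contributes to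
`χ_{1^l}`, with coefficient `1`.
-/

open Finset

section Delta

variable {l : ℕ} (δ : Fin l × Fin l → ℕ)

theorem sum_mul_Delta (g : Fin l → ℤ) :
    ∑ k, g k * Delta l δ k =
      ∑ p : Fin l × Fin l, if p.1 < p.2 then (δ p : ℤ) * (g p.1 - g p.2) else 0 := by
  simp only [Delta, mul_sub, mul_sum, mul_ite, mul_zero, ite_and]
  rw [sum_sub_distrib, sum_comm, sum_comm (f := fun k (p : Fin l × Fin l) =>
    if p.1 < p.2 then if p.2 = k then g k * (δ p : ℤ) else 0 else 0), ← sum_sub_distrib]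
  refine sum_congr rfl fun p _ => ?_
  split_ifs <;> simp [mul_comm]

theorem sum_mul_Delta_nonneg {g : Fin l → ℤ} (hg : Antitone g) :
    0 ≤ ∑ k, g k * Delta l δ k := by
  rw [sum_mul_Delta]
  refine sum_nonneg fun p _ => ?_
  split_ifs with h
  · exact mul_nonneg (by positivity) (sub_nonneg.2 (hg h.le))
  · rfl

theorem sum_mul_Delta_pos {g : Fin l → ℤ} (hg : StrictAnti g) (hδ : δ ≠ 0)
    (hsupp : ∀ p, δ p ≠ 0 → p.1 < p.2) : 0 < ∑ k, g k * Delta l δ k := by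
  rw [sum_mul_Delta]
  obtain ⟨p, hp⟩ := Function.ne_iff.1 hδ
  refine sum_pos' (fun q _ => ?_) ⟨p, mem_univ _, ?_⟩
  · split_ifs with h
    · exact mul_nonneg (by positivity) (sub_nonneg.2 (hg.antitone h.le))
    · rfl
  · rw [if_pos (hsupp p hp)]
    exact mul_pos (by simpa [Nat.pos_iff_ne_zero] using hp) (sub_pos.2 (hg (hsupp p hp)))

end Delta

section Weyl

variable {l : ℕ}

theorem rho_strictAnti (l : ℕ) : StrictAnti (rho l) := fun i j h => by
  have : (i : ℕ) < j := h
  simp only [rho]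
  omega

theorem exists_perm_of_weylCoeff_ne_zero {w ν : Fin l → ℤ} (h : weylCoeff l w ν ≠ 0) :
    ∃ π : Equiv.Perm (Fin l), ∀ i, w (π i) + rho l (π i) = ν i + rho l i := by
  by_contra! hπ
  exact h (sum_eq_zero fun π _ => if_neg (not_forall.2 (hπ π)))

theorem weylCoeff_self {ν : Fin l → ℤ} (hν : Antitone ν) : weylCoeff l ν ν = 1 := by
  have hinj : Function.Injective fun i => ν i + rho l i :=
    (hν.add_strictAnti (rho_strictAnti l)).injective
  unfold weylCoeff
  rw [sum_eq_single 1 (fun π _ hπ => if_neg fun h => hπ (Equiv.ext fun i => hinj (h i)))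
    (by simp)]
  simp

theorem sum_mul_le_of_weylCoeff_ne_zero {w ν : Fin l → ℤ} (hν : Antitone ν)
    (h : weylCoeff l w ν ≠ 0) {f : Fin l → ℤ} (hf : Antitone f) :
    ∑ i, f i * w i ≤ ∑ i, f i * ν i := by
  obtain ⟨π, hπ⟩ := exists_perm_of_weylCoeff_ne_zero h
  set g : Fin l → ℤ := fun i => ν i + rho l i
  have hfg : Monovary f g := fun i j hij =>
    hf ((hν.add_strictAnti (rho_strictAnti l)).lt_iff_gt.1 hij).le
  have key : ∑ i, f i * (w i + rho l i) ≤ ∑ i, f i * g i := calc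
    ∑ i, f i * (w i + rho l i) = ∑ i, f (π i) * g i := by
      rw [← Equiv.sum_comp π]
      simp only [hπ, g]
    _ = ∑ i, f i * g (π⁻¹ i) := by
      rw [← Equiv.sum_comp π fun i => f i * g (π⁻¹ i)]
      simp
    _ ≤ ∑ i, f i * g i := hfg.sum_mul_comp_perm_le_sum_mul
  simp only [g, mul_add, sum_add_distrib] at key
  linarith

theorem sum_le_sum_mul_of_weylCoeff_one_add_Delta_ne_zero {δ : Fin l × Fin l → ℕ}
    {ν : Fin l → ℤ} (hν : Antitone ν) (h : weylCoeff l (fun i => 1 + Delta l δ i) ν ≠ 0)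
    {f : Fin l → ℤ} (hf : Antitone f) : ∑ i, f i ≤ ∑ i, f i * ν i := by
  have hle := sum_mul_le_of_weylCoeff_ne_zero hν h hf
  have hΔ := sum_mul_Delta_nonneg δ hf
  simp only [mul_add, mul_one, sum_add_distrib] at hle
  linarith

theorem weylCoeff_one_add_Delta_const_one {δ : Fin l × Fin l → ℕ} (hδ : δ ≠ 0)
    (hsupp : ∀ p, δ p ≠ 0 → p.1 < p.2) :
    weylCoeff l (fun i => 1 + Delta l δ i) (fun _ => 1) = 0 := by
  by_contra h
  have hle := sum_mul_le_of_weylCoeff_ne_zero antitone_const h (rho_strictAnti l).antitone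
  have hpos := sum_mul_Delta_pos δ (rho_strictAnti l) hδ hsupp
  simp only [mul_add, mul_one, sum_add_distrib] at hle
  linarith

end Weyl

section SCoeff

variable {l : ℕ} {B : Finset (Fin l × Fin l)}

theorem exists_weylCoeff_ne_zero_of_SCoeff_ne_zero {ν : Fin l → ℤ} (h : SCoeff l B ν ≠ 0) :
    ∃ δ : Fin l × Fin l → ℕ, weylCoeff l (fun i => 1 + Delta l δ i) ν ≠ 0 := by
  by_contra! hδ
  refine h (finsum_eq_zero_of_forall_eq_zero fun δ => ?_)
  split_ifs
  · simp [hδ δ]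
  · rfl

theorem SCoeff_const_one (hB : ∀ p ∈ B, p.1 < p.2) : SCoeff l B (fun _ => 1) = 1 := by
  unfold SCoeff
  rw [finsum_eq_single _ 0]
  · simp [Delta, weylCoeff_self (antitone_const : Antitone fun _ : Fin l => (1 : ℤ))]
  · intro δ hδ
    split_ifs with hsupp
    · simp [weylCoeff_one_add_Delta_const_one hδ fun p hp => hB p (hsupp p hp)]
    · rfl

end SCoeff

theorem dominates_const_one_of_forall_antitone {l : ℕ} {ν : Fin l → ℤ}
    (h : ∀ f : Fin l → ℤ, Antitone f → ∑ i, f i ≤ ∑ i, f i * ν i) :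
    (∑ i, ν i) = l ∧
      ∀ r : ℕ, r ≤ l → (r : ℤ) ≤ ∑ i ∈ univ.filter (fun i : Fin l => (i : ℕ) < r), ν i := by
  refine ⟨le_antisymm ?_ ?_, fun r hr => ?_⟩
  · simpa using h (fun _ => -1) antitone_const
  · simpa using h (fun _ => 1) antitone_const
  · have hf : Antitone fun i : Fin l => if (i : ℕ) < r then (1 : ℤ) else 0 := fun i j hij => by
      have : (i : ℕ) ≤ j := hij
      dsimp only
      split_ifs <;> omega
    simpa [sum_filter, Fin.card_filter_val_lt, hr] using h _ hf

theorem stmt19_general (l : ℕ)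
    (cells : Finset (ℕ × ℕ))
    (b : Fin l → ℕ × ℕ) :
    letI Rmu : Finset (Fin l × Fin l) :=
      Finset.univ.filter fun p => p.1 < p.2 ∧ south (b p.1) ∈ cells ∧
        (readLT (south (b p.1)) (b p.2) ∨ south (b p.1) = b p.2)
    SCoeff l Rmu (fun _ => 1) = 1 ∧
    ∀ ν : Fin l → ℤ, (∀ i j : Fin l, i ≤ j → ν j ≤ ν i) →
      SCoeff l Rmu ν ≠ 0 →
      ((∑ i, ν i) = l ∧
        ∀ r : ℕ, r ≤ l →
          (r : ℤ) ≤ ∑ i ∈ Finset.univ.filter (fun i : Fin l => (i : ℕ) < r), ν i) := by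
  refine ⟨SCoeff_const_one fun p hp => (mem_filter.1 hp).2.1, fun ν hν h => ?_⟩
  obtain ⟨δ, hδ⟩ := exists_weylCoeff_ne_zero_of_SCoeff_ne_zero h
  exact dominates_const_one_of_forall_antitone fun f hf =>
    sum_le_sum_mul_of_weylCoeff_one_add_Delta_ne_zero hν hδ hf

/-- For a partition `μ` of `l`, in the character expansion of
`σ( z_1⋯z_l / Π_{α_{ij}∈R_μ}(1 - t z_i/z_j) )`, the coefficient of `χ_{1^l}`
is `1`, and every dominant weight `ν` with nonzero coefficient satisfies
`ν ≥ 1^l` in dominance order (`Σ ν = l` and all partial sums `≥ r`). -/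
theorem stmt19 (l : ℕ) (μ : ℕ → ℕ)
    (hμ : ∀ j, 1 ≤ j → μ (j + 1) ≤ μ j)
    (cells : Finset (ℕ × ℕ))
    (hcells : ∀ c, c ∈ cells ↔ 1 ≤ c.2 ∧ 1 ≤ c.1 ∧ c.1 ≤ μ c.2)
    (hl : cells.card = l)
    (b : Fin l → ℕ × ℕ)
    (hb1 : ∀ a, b a ∈ cells)
    (hb2 : ∀ c ∈ cells, ∃ a, b a = c)
    (hb3 : ∀ a a' : Fin l, a < a' → readLT (b a) (b a')) :
    letI Rmu : Finset (Fin l × Fin l) :=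
      Finset.univ.filter fun p => p.1 < p.2 ∧ south (b p.1) ∈ cells ∧
        (readLT (south (b p.1)) (b p.2) ∨ south (b p.1) = b p.2)
    SCoeff l Rmu (fun _ => 1) = 1 ∧
    ∀ ν : Fin l → ℤ, (∀ i j : Fin l, i ≤ j → ν j ≤ ν i) →
      SCoeff l Rmu ν ≠ 0 →
      ((∑ i, ν i) = l ∧
        ∀ r : ℕ, r ≤ l →
          (r : ℤ) ≤ ∑ i ∈ Finset.univ.filter (fun i : Fin l => (i : ℕ) < r), ν i) :=
  stmt19_general l cells b

end
end
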